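/- In a generalized group, every element a and its inverse a^{-1} have the same identity element, i.e., e(a^{-1}) = e(a). -/

import Mathlib

/-
Both `e a` and `e b`, for any `b` inverse to `a` relative to `e a`, are two-sided identities
for the element `e a`; by uniqueness of identities both equal `e (e a)`.
-/

/-- A generalized group: an associative operation where each element has its own
unique two-sided identity `e a` and an inverse relative to it. -/
structure GenGroup (G : Type*) where
  mul : G → G → G
  e : G → G
  inv : G → G
  mul_assoc : ∀ a b c : G, mul (mul a b) c = mul a (mul b c)
  e_mul : ∀ a : G, mul (e a) a = a
  mul_e : ∀ a : G, mul a (e a) = a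
  e_unique : ∀ a u : G, mul u a = a → mul a u = a → u = e a
  mul_inv : ∀ a : G, mul a (inv a) = e a
  inv_mul : ∀ a : G, mul (inv a) a = e a

namespace GenGroup

variable {G : Type*} (GG : GenGroup G)

theorem e_mul_e_self (a : G) : GG.mul (GG.e a) (GG.e a) = GG.e a :=
  calc GG.mul (GG.e a) (GG.e a)
      = GG.mul (GG.e a) (GG.mul a (GG.inv a)) := by rw [GG.mul_inv]
    _ = GG.mul a (GG.inv a) := by rw [← GG.mul_assoc, GG.e_mul]
    _ = GG.e a := GG.mul_inv a

theorem e_e (a : G) : GG.e (GG.e a) = GG.e a :=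
  (GG.e_unique _ _ (GG.e_mul_e_self a) (GG.e_mul_e_self a)).symm

theorem e_eq_of_mul_eq_e {a b : G} (hba : GG.mul b a = GG.e a) (hab : GG.mul a b = GG.e a) :
    GG.e b = GG.e a := by
  have h_left : GG.mul (GG.e b) (GG.e a) = GG.e a :=
    calc GG.mul (GG.e b) (GG.e a)
        = GG.mul (GG.e b) (GG.mul b a) := by rw [hba]
      _ = GG.mul b a := by rw [← GG.mul_assoc, GG.e_mul]
      _ = GG.e a := hba
  have h_right : GG.mul (GG.e a) (GG.e b) = GG.e a :=
    calc GG.mul (GG.e a) (GG.e b)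
        = GG.mul (GG.mul a b) (GG.e b) := by rw [hab]
      _ = GG.mul a b := by rw [GG.mul_assoc, GG.mul_e]
      _ = GG.e a := hab
  rw [GG.e_unique _ _ h_left h_right, GG.e_e]

end GenGroup

theorem genGroup_e_inv_general {G : Type*} (GG : GenGroup G) (a : G) :
    GG.e (GG.inv a) = GG.e a :=
  GG.e_eq_of_mul_eq_e (GG.inv_mul a) (GG.mul_inv a)

/-- In a generalized group, an element and its inverse have the same identity. -/
theorem genGroup_e_inv {G : Type*} [Nonempty G] (GG : GenGroup G) (a : G) :
    GG.e (GG.inv a) = GG.e a :=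
  genGroup_e_inv_general GG a
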